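/- arXiv:1901.05215 — 2 statements merged into one kernel-verified Lean document; each statement's English description precedes it below -/
import Mathlib

section
/- Let Ω = {x : l ≤ x ≤ u} be a box, {x_k} ⊂ Ω with x_k → x̄ ∈ Ω, {α_k} ⊂ ℝ₊ with α_k → 0, and {d_k} with d_k → d̄ where d̄ ∈ D(x̄), d̄ ≠ 0. Then there exists m ∈ ℕ such that for all k > m, [x_k + α_k d_k]_{[l,u]} ≠ x_k. -/
open Filter Topology

/-- If `x_k → x̄ ∈ Ω`, `α_k ↓ 0`, `d_k → d̄ ∈ D(x̄) \ {0}`, then eventually the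
projected trial point `[x_k + α_k d_k]_{[l,u]}` differs from `x_k`. -/
theorem projected_step_eventually_ne
    (n : ℕ) (l u : Fin n → ℝ) (hlu : ∀ i, l i < u i)
    (Ω : Set (Fin n → ℝ)) (hΩ : Ω = {x | ∀ i, l i ≤ x i ∧ x i ≤ u i})
    (x : ℕ → (Fin n → ℝ)) (hx : ∀ k, x k ∈ Ω)
    (xbar : Fin n → ℝ) (hxbar : xbar ∈ Ω)
    (hxlim : Tendsto x atTop (𝓝 xbar))
    (α : ℕ → ℝ) (hα : ∀ k, 0 < α k) (hαlim : Tendsto α atTop (𝓝 0))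
    (d : ℕ → (Fin n → ℝ)) (dbar : Fin n → ℝ)
    (hdlim : Tendsto d atTop (𝓝 dbar))
    (hdbar : ∀ i, (xbar i = l i → 0 ≤ dbar i) ∧ (xbar i = u i → dbar i ≤ 0))
    (hdne : dbar ≠ 0) :
    ∃ m : ℕ, ∀ k > m,
      (fun i => max (l i) (min (u i) (x k i + α k * d k i))) ≠ x k := by
  subst hΩ
  obtain ⟨i, hi⟩ : ∃ i, dbar i ≠ 0 := by
    by_contra h; push_neg at h; exact hdne (funext h)
  have hxi : Tendsto (fun k => x k i) atTop (𝓝 (xbar i)) := tendsto_pi_nhds.mp hxlim i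
  have hdi : Tendsto (fun k => d k i) atTop (𝓝 (dbar i)) := tendsto_pi_nhds.mp hdlim i
  have hprod : Tendsto (fun k => α k * d k i) atTop (𝓝 0) := by
    simpa using hαlim.mul hdi
  have hsum : Tendsto (fun k => x k i + α k * d k i) atTop (𝓝 (xbar i)) := by
    simpa using hxi.add hprod
  have key : ∀ᶠ k in atTop,
      (fun j => max (l j) (min (u j) (x k j + α k * d k j))) ≠ x k := by
    rcases hi.lt_or_gt with hneg | hpos
    · have hxl : l i < xbar i := by
        rcases (hxbar i).1.lt_or_eq with h | h
        · exact h
        · exact absurd ((hdbar i).1 h.symm) (not_le.mpr hneg)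
      have h1 : ∀ᶠ k in atTop, l i < x k i + α k * d k i :=
        hsum.eventually_const_lt hxl
      have h2 : ∀ᶠ k in atTop, d k i < 0 := hdi.eventually_lt_const hneg
      filter_upwards [h1, h2] with k hk1 hk2 heq
      have hlt : x k i + α k * d k i < x k i := by
        nlinarith [hα k]
      have hcoord := congrFun heq i
      have hmin : min (u i) (x k i + α k * d k i) = x k i + α k * d k i :=
        min_eq_right (le_of_lt (hlt.trans_le (hx k i).2))
      rw [hmin, max_eq_right hk1.le] at hcoord
      exact absurd hcoord hlt.ne
    · have hxu : xbar i < u i := by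
        rcases (hxbar i).2.lt_or_eq with h | h
        · exact h
        · exact absurd ((hdbar i).2 h) (not_le.mpr hpos)
      have h1 : ∀ᶠ k in atTop, x k i + α k * d k i < u i :=
        hsum.eventually_lt_const hxu
      have h2 : ∀ᶠ k in atTop, 0 < d k i := hdi.eventually_const_lt hpos
      filter_upwards [h1, h2] with k hk1 hk2 heq
      have hlt : x k i < x k i + α k * d k i := by
        nlinarith [hα k]
      have hcoord := congrFun heq i
      rw [min_eq_right hk1.le, max_eq_right (le_of_lt ((hx k i).1.trans_lt hlt))] at hcoord
      exact absurd hcoord hlt.ne'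
  obtain ⟨m, hm⟩ := eventually_atTop.mp key
  exact ⟨m, fun k hk => hm k hk.le⟩
end

section
/- Under the hypotheses of the previous statement (x_k → x̄, α_k → 0, d_k → d̄ ∈ D(x̄) \ {0}), defining w_k = ([x_k + α_k d_k]_{[l,u]} − x_k)/α_k, one has w_k → d̄ as k → ∞. -/
open Filter Topology

lemma clamp_lip (l u a b : ℝ) : |max l (min u a) - max l (min u b)| ≤ |a - b| := by
  have h1 : |min u a - min u b| ≤ |a - b| := by
    have := abs_max_sub_max_le_abs (-a) (-b) (-u)
    rw [abs_sub_comm, abs_sub_comm a b]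
    simpa [max_neg_neg, min_comm, sub_eq_neg_add, add_comm] using this
  have h2 : |max l (min u a) - max l (min u b)| ≤ |min u a - min u b| := by
    simpa [max_comm] using abs_max_sub_max_le_abs (min u a) (min u b) l
  exact h2.trans h1

/-- If `x_k → x̄ ∈ Ω`, `α_k ↓ 0`, `d_k → d̄ ∈ D(x̄) \ {0}`, then the normalized
projected steps `w_k = ([x_k + α_k d_k]_{[l,u]} − x_k)/α_k` converge to `d̄`. -/
theorem projected_directions_tendsto
    (n : ℕ) (l u : Fin n → ℝ) (hlu : ∀ i, l i < u i)
    (Ω : Set (Fin n → ℝ)) (hΩ : Ω = {x | ∀ i, l i ≤ x i ∧ x i ≤ u i})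
    (x : ℕ → (Fin n → ℝ)) (hx : ∀ k, x k ∈ Ω)
    (xbar : Fin n → ℝ) (hxbar : xbar ∈ Ω)
    (hxlim : Tendsto x atTop (𝓝 xbar))
    (α : ℕ → ℝ) (hα : ∀ k, 0 < α k) (hαlim : Tendsto α atTop (𝓝 0))
    (d : ℕ → (Fin n → ℝ)) (dbar : Fin n → ℝ)
    (hdlim : Tendsto d atTop (𝓝 dbar))
    (hdbar : ∀ i, (xbar i = l i → 0 ≤ dbar i) ∧ (xbar i = u i → dbar i ≤ 0))
    (hdne : dbar ≠ 0)
    (w : ℕ → (Fin n → ℝ))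
    (hw : ∀ k, w k = fun i =>
      (max (l i) (min (u i) (x k i + α k * d k i)) - x k i) / α k) :
    Tendsto w atTop (𝓝 dbar) := by
  rw [hΩ] at hx hxbar
  rw [tendsto_pi_nhds]
  intro i
  have hxi : Tendsto (fun k => x k i) atTop (𝓝 (xbar i)) := tendsto_pi_nhds.1 hxlim i
  have hdi : Tendsto (fun k => d k i) atTop (𝓝 (dbar i)) := tendsto_pi_nhds.1 hdlim i
  have hti : Tendsto (fun k => x k i + α k * d k i) atTop (𝓝 (xbar i)) := by
    have := hxi.add (hαlim.mul hdi)
    simpa using this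
  have hwk : ∀ k, w k i
      = (max (l i) (min (u i) (x k i + α k * d k i)) - x k i) / α k := fun k => by
    rw [hw k]
  rcases lt_trichotomy (dbar i) 0 with h | h | h
  · have hlt : l i < xbar i := by
      rcases lt_or_eq_of_le (hxbar i).1 with h' | h'
      · exact h'
      · exact absurd ((hdbar i).1 h'.symm) (not_le.2 h)
    have h1 : ∀ᶠ k in atTop, l i < x k i + α k * d k i :=
      hti.eventually (eventually_gt_nhds hlt)
    have h2 : ∀ᶠ k in atTop, d k i < 0 := hdi.eventually (eventually_lt_nhds h)
    apply hdi.congr'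
    filter_upwards [h1, h2] with k hk1 hk2
    have hmin : min (u i) (x k i + α k * d k i) = x k i + α k * d k i :=
      min_eq_right (by nlinarith [(hx k i).2, hα k])
    rw [hwk k, hmin, max_eq_right hk1.le, add_sub_cancel_left,
      mul_div_cancel_left₀ _ (hα k).ne']
  · rw [h]
    have hbd : ∀ k, ‖w k i‖ ≤ |d k i| := by
      intro k
      have hx' : max (l i) (min (u i) (x k i)) = x k i := by
        rw [min_eq_right (hx k i).2, max_eq_right (hx k i).1]
      have hlip := clamp_lip (l i) (u i) (x k i + α k * d k i) (x k i)
      rw [hx'] at hlip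
      rw [Real.norm_eq_abs, hwk k, abs_div, abs_of_pos (hα k),
        div_le_iff₀ (hα k)]
      calc |max (l i) (min (u i) (x k i + α k * d k i)) - x k i|
          ≤ |x k i + α k * d k i - x k i| := hlip
        _ = α k * |d k i| := by
            rw [add_sub_cancel_left, abs_mul, abs_of_pos (hα k), mul_comm]
        _ = |d k i| * α k := mul_comm _ _
    have habs : Tendsto (fun k => |d k i|) atTop (𝓝 0) := by
      have := hdi.abs
      rwa [h, abs_zero] at this
    exact squeeze_zero_norm hbd habs
  · have hlt : xbar i < u i := by
      rcases lt_or_eq_of_le (hxbar i).2 with h' | h'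
      · exact h'
      · exact absurd ((hdbar i).2 h') (not_le.2 h)
    have h1 : ∀ᶠ k in atTop, x k i + α k * d k i < u i :=
      hti.eventually (eventually_lt_nhds hlt)
    have h2 : ∀ᶠ k in atTop, 0 < d k i := hdi.eventually (eventually_gt_nhds h)
    apply hdi.congr'
    filter_upwards [h1, h2] with k hk1 hk2
    have hmax : max (l i) (x k i + α k * d k i) = x k i + α k * d k i :=
      max_eq_right (by nlinarith [(hx k i).1, hα k])
    rw [hwk k, min_eq_right hk1.le, hmax, add_sub_cancel_left,
      mul_div_cancel_left₀ _ (hα k).ne']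
end
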